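/- arXiv:2402.09947 — 9 statements merged into one kernel-verified Lean document; each statement's English description precedes it below -/
import Mathlib

section
/- Let n ≥ 1, let V be a real vector space, let v : 2^{[n]} → V be any map, and let p be an efficient coalition structure on [n]. Then Σ_{i∈[n]} Σ_{S⊆[n]∖{i}} p^i(S)·(v(S∪{i}) − v(S)) = v([n]) − v(∅). (This is the pointwise-in-noise form of the efficiency property, Proposition (iv): for efficient coalition structures, the sum over players of the coalition-averaged marginal contributions equals the grand payoff minus the empty payoff.) -/
open Finset

private lemma aux_reindex {n : ℕ} {M : Type*} [AddCommGroup M] [Module ℝ M]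
    (q : Finset (Fin n) → ℝ) (g : Finset (Fin n) → M) (i : Fin n) :
    ∑ T ∈ (Finset.univ : Finset (Fin n)).powerset,
      (if i ∈ T then q (T.erase i) • g T else -(q T • g T)) =
    ∑ S ∈ ((Finset.univ : Finset (Fin n)).erase i).powerset,
      (q S • g (insert i S) - q S • g S) := by
  classical
  have huniv : (Finset.univ : Finset (Fin n)) = insert i (univ.erase i) :=
    (insert_erase (mem_univ i)).symm
  rw [huniv, Finset.sum_powerset_insert (notMem_erase i univ)]
  rw [← huniv]
  have h1 : ∑ T ∈ (univ.erase i).powerset,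
      (if i ∈ T then q (T.erase i) • g T else -(q T • g T)) =
      ∑ T ∈ (univ.erase i).powerset, -(q T • g T) := by
    apply Finset.sum_congr rfl
    intro T hT
    rw [if_neg]
    exact fun hi => (notMem_erase i univ) (mem_powerset.mp hT hi)
  have h2 : ∑ T ∈ (univ.erase i).powerset,
      (if i ∈ insert i T then q ((insert i T).erase i) • g (insert i T)
        else -(q (insert i T) • g (insert i T))) =
      ∑ T ∈ (univ.erase i).powerset, q T • g (insert i T) := by
    apply Finset.sum_congr rfl
    intro T hT
    rw [if_pos (mem_insert_self i T), erase_insert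
      (fun hi => (notMem_erase i univ) (mem_powerset.mp hT hi))]
  rw [h1, h2, Finset.sum_sub_distrib, Finset.sum_neg_distrib]
  abel

private lemma aux_collapse {n : ℕ} {M : Type*} [AddCommGroup M] [Module ℝ M]
    (p : Fin n → Finset (Fin n) → ℝ) (g : Finset (Fin n) → M) (T : Finset (Fin n)) :
    ∑ i : Fin n, (if i ∈ T then p i (T.erase i) • g T else -(p i T • g T)) =
    ((∑ i ∈ T, p i (T.erase i)) - ∑ j ∈ Tᶜ, p j T) • g T := by
  classical
  have filterT : filter (fun i => i ∈ T) univ = T := by ext x; simp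
  have filterTc : filter (fun i => ¬ i ∈ T) univ = Tᶜ := by ext x; simp
  rw [← Finset.sum_filter_add_sum_filter_not univ (fun i => i ∈ T), filterT, filterTc]
  have e1 : ∑ i ∈ T, (if i ∈ T then p i (T.erase i) • g T else -(p i T • g T)) =
      (∑ i ∈ T, p i (T.erase i)) • g T := by
    rw [Finset.sum_smul]
    exact Finset.sum_congr rfl fun i hi => if_pos hi
  have e2 : ∑ i ∈ Tᶜ, (if i ∈ T then p i (T.erase i) • g T else -(p i T • g T)) =
      -((∑ j ∈ Tᶜ, p j T) • g T) := by
    rw [Finset.sum_smul, ← Finset.sum_neg_distrib]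
    exact Finset.sum_congr rfl fun i hi => if_neg (Finset.mem_compl.mp hi)
  rw [e1, e2, sub_smul]
  abel

private lemma aux_peel {n : ℕ} {M : Type*} [AddCommGroup M]
    (f : Finset (Fin n) → M) (hune : (univ : Finset (Fin n)) ≠ ∅)
    (hf : ∀ T : Finset (Fin n), T ≠ ∅ → T ≠ univ → f T = 0) :
    ∑ T ∈ (Finset.univ : Finset (Fin n)).powerset, f T = f univ + f ∅ := by
  classical
  have hmem : (univ : Finset (Fin n)) ∈ (univ : Finset (Fin n)).powerset :=
    Finset.mem_powerset_self _
  rw [← Finset.add_sum_erase _ f hmem]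
  congr 1
  have hmem2 : (∅ : Finset (Fin n)) ∈ ((univ : Finset (Fin n)).powerset).erase univ := by
    rw [Finset.mem_erase]
    exact ⟨hune.symm, Finset.empty_mem_powerset _⟩
  rw [← Finset.add_sum_erase _ f hmem2]
  have h0 : ∑ T ∈ (((univ : Finset (Fin n)).powerset).erase univ).erase ∅, f T = 0 := by
    apply Finset.sum_eq_zero
    intro T hT
    rw [Finset.mem_erase, Finset.mem_erase] at hT
    exact hf T hT.1 hT.2.1
  rw [h0, add_zero]

/-- Proposition (iv), pointwise in the noise: for an efficient coalition structure `p`,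
the sum over players of the coalition-averaged marginal contributions equals the
grand payoff minus the empty payoff. -/
theorem stmt0 (n : ℕ) (hn : 1 ≤ n) (V : Type*) [AddCommGroup V] [Module ℝ V]
    (v : Finset (Fin n) → V)
    (p : Fin n → Finset (Fin n) → ℝ)
    (hp_nonneg : ∀ (i : Fin n) (S : Finset (Fin n)), 0 ≤ p i S)
    (hp_sum : ∀ i : Fin n,
      ∑ S ∈ ((Finset.univ : Finset (Fin n)).erase i).powerset, p i S = 1)
    (heff_grand : ∑ i : Fin n, p i ((Finset.univ : Finset (Fin n)).erase i) = 1)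
    (heff_flow : ∀ S : Finset (Fin n), S ≠ ∅ → S ≠ Finset.univ →
      ∑ i ∈ S, p i (S.erase i) = ∑ j ∈ Sᶜ, p j S) :
    ∑ i : Fin n, ∑ S ∈ ((Finset.univ : Finset (Fin n)).erase i).powerset,
      p i S • (v (insert i S) - v S) = v Finset.univ - v ∅ := by
  classical
  haveI : Nonempty (Fin n) := ⟨⟨0, hn⟩⟩
  set c : Finset (Fin n) → ℝ := fun T =>
    (∑ i ∈ T, p i (T.erase i)) - ∑ j ∈ Tᶜ, p j T with hc
  have collapse : ∀ (g : Finset (Fin n) → V) (T : Finset (Fin n)),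
      ∑ i : Fin n, (if i ∈ T then p i (T.erase i) • g T else -(p i T • g T)) =
      c T • g T := fun g T => aux_collapse p g T
  -- rewrite the LHS as a sum over coalitions
  have lhs_eq : ∑ i : Fin n, ∑ S ∈ ((Finset.univ : Finset (Fin n)).erase i).powerset,
      p i S • (v (insert i S) - v S) =
      ∑ T ∈ (Finset.univ : Finset (Fin n)).powerset, c T • v T := by
    have : ∀ i : Fin n, ∑ S ∈ (univ.erase i).powerset, p i S • (v (insert i S) - v S) =
        ∑ T ∈ (Finset.univ : Finset (Fin n)).powerset,
          (if i ∈ T then p i (T.erase i) • v T else -(p i T • v T)) := by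
      intro i
      rw [aux_reindex (p i) v i]
      exact Finset.sum_congr rfl fun S _ => smul_sub _ _ _
    rw [Finset.sum_congr rfl fun i _ => this i, Finset.sum_comm]
    exact Finset.sum_congr rfl fun T _ => collapse v T
  rw [lhs_eq]
  -- total coefficient sum is zero
  have collapseR : ∀ T : Finset (Fin n),
      ∑ i : Fin n, (if i ∈ T then p i (T.erase i) else -(p i T)) = c T := by
    intro T
    have := aux_collapse (M := ℝ) p (fun _ => (1 : ℝ)) T
    simpa [smul_eq_mul] using this
  have hcsum : ∑ T ∈ (Finset.univ : Finset (Fin n)).powerset, c T = 0 := by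
    rw [← Finset.sum_congr rfl fun T _ => collapseR T, Finset.sum_comm]
    apply Finset.sum_eq_zero
    intro i _
    have := aux_reindex (M := ℝ) (p i) (fun _ => (1 : ℝ)) i
    simpa [smul_eq_mul] using this
  -- values of c at univ and at the rest
  have hcuniv : c univ = 1 := by
    rw [hc]
    simp [heff_grand]
  have hczero : ∀ T : Finset (Fin n), T ≠ ∅ → T ≠ univ → c T = 0 := by
    intro T h1 h2
    rw [hc]
    simp [heff_flow T h1 h2]
  have hune : (univ : Finset (Fin n)) ≠ ∅ := Finset.univ_nonempty.ne_empty
  have hcempty : c ∅ = -1 := by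
    have := aux_peel c hune hczero
    rw [hcsum, hcuniv] at this
    linarith
  rw [aux_peel (fun T => c T • v T) hune (fun T h1 h2 => by show c T • v T = 0; rw [hczero T h1 h2, zero_smul])]
  rw [hcuniv, hcempty, one_smul, neg_one_smul]
  abel
end

section
/- Let n ≥ 2 and let p be a coalition structure on [n] satisfying Σ_{i∈S} p^i(S∖{i}) = Σ_{j∉S} p^j(S) for every S with ∅ ≠ S ≠ [n]. Then for every k with 1 ≤ k ≤ n−1, Σ_{S⊆[n], |S|=k} Σ_{i∈S} p^i(S∖{i}) = Σ_{S⊆[n], |S|=k+1} Σ_{i∈S} p^i(S∖{i}); that is, the quantity Σ_{|S|=k} Σ_{i∈S} p^i(S∖{i}) is independent of k for 1 ≤ k ≤ n. -/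
open Finset

/-- For a coalition structure satisfying the flow (efficiency) condition, the quantity
`Σ_{|S|=k} Σ_{i∈S} p^i(S∖{i})` is the same for `k` and `k+1`, for `1 ≤ k ≤ n-1`. -/
theorem stmt1 (n : ℕ) (hn : 2 ≤ n)
    (p : Fin n → Finset (Fin n) → ℝ)
    (hp_nonneg : ∀ (i : Fin n) (S : Finset (Fin n)), 0 ≤ p i S)
    (hp_sum : ∀ i : Fin n,
      ∑ S ∈ ((Finset.univ : Finset (Fin n)).erase i).powerset, p i S = 1)
    (heff_flow : ∀ S : Finset (Fin n), S ≠ ∅ → S ≠ Finset.univ →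
      ∑ i ∈ S, p i (S.erase i) = ∑ j ∈ Sᶜ, p j S)
    (k : ℕ) (hk1 : 1 ≤ k) (hk2 : k ≤ n - 1) :
    ∑ S ∈ Finset.powersetCard k (Finset.univ : Finset (Fin n)), ∑ i ∈ S, p i (S.erase i)
      = ∑ S ∈ Finset.powersetCard (k + 1) (Finset.univ : Finset (Fin n)),
          ∑ i ∈ S, p i (S.erase i) := by
  have key : ∑ T ∈ Finset.powersetCard (k + 1) (Finset.univ : Finset (Fin n)),
      ∑ i ∈ T, p i (T.erase i)
      = ∑ S ∈ Finset.powersetCard k (Finset.univ : Finset (Fin n)), ∑ j ∈ Sᶜ, p j S := by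
    rw [Finset.sum_sigma', Finset.sum_sigma']
    refine Finset.sum_nbij' (fun x => ⟨x.1.erase x.2, x.2⟩) (fun x => ⟨insert x.2 x.1, x.2⟩)
      ?_ ?_ ?_ ?_ ?_
    · rintro ⟨T, i⟩ hx
      simp only [Finset.mem_sigma, Finset.mem_powersetCard_univ] at hx ⊢
      obtain ⟨hT, hi⟩ := hx
      refine ⟨?_, ?_⟩
      · rw [Finset.card_erase_of_mem hi, hT]
        omega
      · simp
    · rintro ⟨S, j⟩ hx
      simp only [Finset.mem_sigma, Finset.mem_powersetCard_univ, Finset.mem_compl] at hx ⊢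
      obtain ⟨hS, hj⟩ := hx
      refine ⟨?_, ?_⟩
      · rw [Finset.card_insert_of_notMem hj, hS]
      · simp
    · rintro ⟨T, i⟩ hx
      simp only [Finset.mem_sigma, Finset.mem_powersetCard_univ] at hx
      simp [Finset.insert_erase hx.2]
    · rintro ⟨S, j⟩ hx
      simp only [Finset.mem_sigma, Finset.mem_powersetCard_univ, Finset.mem_compl] at hx
      simp [Finset.erase_insert hx.2]
    · rintro ⟨T, i⟩ hx
      rfl
  rw [key]
  refine Finset.sum_congr rfl fun S hS => ?_
  rw [Finset.mem_powersetCard_univ] at hS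
  apply heff_flow
  · intro h
    rw [h] at hS
    simp at hS
    omega
  · intro h
    rw [h, Finset.card_univ, Fintype.card_fin] at hS
    omega
end

section
/- If p is an efficient coalition structure on [n] with n ≥ 1, then Σ_{i∈[n]} p^i(∅) = 1. -/
open Finset

/-- For an efficient coalition structure, `Σ_{i∈[n]} p^i(∅) = 1`. -/
theorem stmt2 (n : ℕ) (hn : 1 ≤ n)
    (p : Fin n → Finset (Fin n) → ℝ)
    (hp_nonneg : ∀ (i : Fin n) (S : Finset (Fin n)), 0 ≤ p i S)
    (hp_sum : ∀ i : Fin n,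
      ∑ S ∈ ((Finset.univ : Finset (Fin n)).erase i).powerset, p i S = 1)
    (heff_grand : ∑ i : Fin n, p i ((Finset.univ : Finset (Fin n)).erase i) = 1)
    (heff_flow : ∀ S : Finset (Fin n), S ≠ ∅ → S ≠ Finset.univ →
      ∑ i ∈ S, p i (S.erase i) = ∑ j ∈ Sᶜ, p j S) :
    ∑ i : Fin n, p i (∅ : Finset (Fin n)) = 1 := by
  classical
  set P := (Finset.univ : Finset (Fin n)).powerset with hP
  have hne : (∅ : Finset (Fin n)) ≠ Finset.univ := by
    have : (⟨0, hn⟩ : Fin n) ∈ (Finset.univ : Finset (Fin n)) := mem_univ _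
    intro h; rw [← h] at this; exact absurd this (notMem_empty _)
  have hsubset : ∀ (i : Fin n) (S : Finset (Fin n)),
      S ∈ ((Finset.univ : Finset (Fin n)).erase i).powerset → i ∉ S := by
    intro i S hS h
    exact (notMem_erase i _) (Finset.mem_powerset.mp hS h)
  have huniv : ∀ i : Fin n, (Finset.univ : Finset (Fin n)) =
      insert i (Finset.univ.erase i) := fun i => (Finset.insert_erase (mem_univ i)).symm
  -- key A : per-player column sum for the "erase" double sum
  have keyA : ∀ i : Fin n,
      ∑ S ∈ P, (if i ∈ S then p i (S.erase i) else 0) = 1 := by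
    intro i
    rw [hP, huniv i, Finset.sum_powerset_insert (notMem_erase i _)]
    have h1 : ∑ S ∈ (Finset.univ.erase i).powerset,
        (if i ∈ S then p i (S.erase i) else 0) = 0 :=
      Finset.sum_eq_zero fun S hS => by simp [hsubset i S hS]
    have h2 : ∑ S ∈ (Finset.univ.erase i).powerset,
        (if i ∈ insert i S then p i ((insert i S).erase i) else 0) = 1 := by
      rw [← hp_sum i]
      refine Finset.sum_congr rfl fun S hS => ?_
      simp [Finset.erase_insert (hsubset i S hS)]
    rw [h1, h2, zero_add]
  have keyB : ∀ i : Fin n,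
      ∑ S ∈ P, (if i ∈ S then 0 else p i S) = 1 := by
    intro i
    rw [hP, huniv i, Finset.sum_powerset_insert (notMem_erase i _)]
    have h1 : ∑ S ∈ (Finset.univ.erase i).powerset,
        (if i ∈ S then 0 else p i S) = 1 := by
      rw [← hp_sum i]
      refine Finset.sum_congr rfl fun S hS => ?_
      simp [hsubset i S hS]
    have h2 : ∑ S ∈ (Finset.univ.erase i).powerset,
        (if i ∈ insert i S then 0 else p i (insert i S)) = 0 :=
      Finset.sum_eq_zero fun S _ => by simp
    rw [h1, h2, add_zero]
  -- total double sums
  have hA : ∑ S ∈ P, ∑ i ∈ S, p i (S.erase i) = (n : ℝ) := by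
    have step : ∀ S ∈ P, ∑ i ∈ S, p i (S.erase i)
        = ∑ i : Fin n, (if i ∈ S then p i (S.erase i) else 0) := by
      intro S _
      rw [Finset.sum_ite_mem, Finset.univ_inter]
    rw [Finset.sum_congr rfl step, Finset.sum_comm]
    simp [keyA]
  have hB : ∑ S ∈ P, ∑ j ∈ Sᶜ, p j S = (n : ℝ) := by
    have step : ∀ S ∈ P, ∑ j ∈ Sᶜ, p j S
        = ∑ i : Fin n, (if i ∈ S then 0 else p i S) := by
      intro S _
      have e : ∀ i : Fin n, (if i ∈ S then 0 else p i S) = (if i ∈ Sᶜ then p i S else 0) := by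
        intro i; by_cases h : i ∈ S <;> simp [h]
      rw [Finset.sum_congr rfl (fun i _ => e i), Finset.sum_ite_mem, Finset.univ_inter]
    rw [Finset.sum_congr rfl step, Finset.sum_comm]
    simp [keyB]
  -- peel off boundary terms
  have hmemU : (Finset.univ : Finset (Fin n)) ∈ P := Finset.mem_powerset.mpr (subset_refl _)
  have hmemE : (∅ : Finset (Fin n)) ∈ P.erase Finset.univ :=
    Finset.mem_erase.mpr ⟨hne, Finset.mem_powerset.mpr (empty_subset _)⟩
  set f : Finset (Fin n) → ℝ := fun S => ∑ i ∈ S, p i (S.erase i) with hf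
  set g : Finset (Fin n) → ℝ := fun S => ∑ j ∈ Sᶜ, p j S with hg
  have hAsplit : f Finset.univ + (f ∅ + ∑ S ∈ (P.erase Finset.univ).erase ∅, f S) = (n : ℝ) := by
    rw [Finset.add_sum_erase _ f hmemE, Finset.add_sum_erase _ f hmemU]
    exact hA
  have hBsplit : g Finset.univ + (g ∅ + ∑ S ∈ (P.erase Finset.univ).erase ∅, g S) = (n : ℝ) := by
    rw [Finset.add_sum_erase _ g hmemE, Finset.add_sum_erase _ g hmemU]
    exact hB
  have hmid : ∑ S ∈ (P.erase Finset.univ).erase ∅, f S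
      = ∑ S ∈ (P.erase Finset.univ).erase ∅, g S := by
    refine Finset.sum_congr rfl fun S hS => ?_
    have h1 := Finset.mem_erase.mp hS
    have h2 := Finset.mem_erase.mp h1.2
    exact heff_flow S h1.1 h2.1
  have hfu : f Finset.univ = 1 := heff_grand
  have hfe : f ∅ = 0 := by simp [hf]
  have hgu : g Finset.univ = 0 := by simp [hg]
  have hge : g ∅ = ∑ i : Fin n, p i ∅ := by simp [hg]
  rw [← hge]
  linarith [hAsplit, hBsplit, hmid, hfu, hfe, hgu]
end

section
/- Let n ≥ 1 and let p be a coalition structure on [n] that is both efficient and symmetric, with p^i(S) = p̄(|S|). Then p̄(k) = 1/(n·C(n−1,k)) for every k ∈ {0,…,n−1}, where C denotes the binomial coefficient; that is, the Shapley coalition structure is the unique coalition structure that is both efficient and symmetric. -/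
open Finset

/-- Uniqueness: a coalition structure that is both efficient and symmetric (with
shared size-profile `pbar`) must be the Shapley coalition structure,
i.e. `pbar k = 1/(n·C(n−1,k))` for all `k ≤ n−1`. -/
theorem stmt4 (n : ℕ) (hn : 1 ≤ n)
    (p : Fin n → Finset (Fin n) → ℝ) (pbar : ℕ → ℝ)
    (hp_nonneg : ∀ (i : Fin n) (S : Finset (Fin n)), 0 ≤ p i S)
    (hp_sum : ∀ i : Fin n,
      ∑ S ∈ ((Finset.univ : Finset (Fin n)).erase i).powerset, p i S = 1)
    (heff_grand : ∑ i : Fin n, p i ((Finset.univ : Finset (Fin n)).erase i) = 1)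
    (heff_flow : ∀ S : Finset (Fin n), S ≠ ∅ → S ≠ Finset.univ →
      ∑ i ∈ S, p i (S.erase i) = ∑ j ∈ Sᶜ, p j S)
    (hsym : ∀ (i : Fin n) (S : Finset (Fin n)),
      S ⊆ (Finset.univ : Finset (Fin n)).erase i → p i S = pbar S.card)
    (k : ℕ) (hk : k ≤ n - 1) :
    pbar k = 1 / ((n : ℝ) * ((n - 1).choose k : ℝ)) := by
  -- grand coalition equation
  have hgrand : (n : ℝ) * pbar (n - 1) = 1 := by
    have : ∑ i : Fin n, p i ((Finset.univ : Finset (Fin n)).erase i)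
        = ∑ i : Fin n, pbar (n - 1) := by
      refine Finset.sum_congr rfl fun i _ => ?_
      rw [hsym i _ (subset_refl _), Finset.card_erase_of_mem (mem_univ i),
        Finset.card_univ, Fintype.card_fin]
    rw [this, Finset.sum_const, Finset.card_univ, Fintype.card_fin,
      nsmul_eq_mul] at heff_grand
    exact heff_grand
  -- recurrence: for 1 ≤ s ≤ n-1, s * pbar (s-1) = (n - s) * pbar s
  have hstep : ∀ s : ℕ, 1 ≤ s → s ≤ n - 1 →
      (s : ℝ) * pbar (s - 1) = ((n : ℝ) - s) * pbar s := by
    intro s hs1 hs2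
    have hsn : s < n := lt_of_le_of_lt hs2 (Nat.sub_lt hn one_pos)
    set a : Fin n := ⟨s, hsn⟩ with ha
    set S : Finset (Fin n) := Finset.Iio a with hS
    have hcard : S.card = s := by rw [hS, Fin.card_Iio]
    have hne : S ≠ ∅ := by
      intro h
      have : (⟨0, hn⟩ : Fin n) ∈ S := by
        simp [hS, Fin.lt_def, ha]
        omega
      simp [h] at this
    have hnu : S ≠ Finset.univ := by
      intro h
      have : a ∈ S := h ▸ mem_univ a
      simp [hS] at this
    have hflow := heff_flow S hne hnu
    have hL : ∑ i ∈ S, p i (S.erase i) = (s : ℝ) * pbar (s - 1) := by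
      have : ∀ i ∈ S, p i (S.erase i) = pbar (s - 1) := by
        intro i hi
        rw [hsym i _ (by
          intro x hx
          exact Finset.mem_erase.2 ⟨(Finset.mem_erase.1 hx).1, mem_univ x⟩),
          Finset.card_erase_of_mem hi, hcard]
      rw [Finset.sum_congr rfl this, Finset.sum_const, hcard, nsmul_eq_mul]
    have hR : ∑ j ∈ Sᶜ, p j S = ((n : ℝ) - s) * pbar s := by
      have : ∀ j ∈ Sᶜ, p j S = pbar s := by
        intro j hj
        rw [hsym j S (Finset.subset_erase.2 ⟨Finset.subset_univ S,
          Finset.mem_compl.1 hj⟩), hcard]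
      rw [Finset.sum_congr rfl this, Finset.sum_const, Finset.card_compl,
        hcard, Fintype.card_fin, nsmul_eq_mul, Nat.cast_sub hsn.le]
    rw [hL, hR] at hflow
    exact hflow
  -- main downward induction
  have key : ∀ j : ℕ, j ≤ n - 1 →
      pbar (n - 1 - j) = 1 / ((n : ℝ) * ((n - 1).choose (n - 1 - j) : ℝ)) := by
    intro j
    induction j with
    | zero =>
      intro _
      have hnR : (n : ℝ) ≠ 0 := Nat.cast_ne_zero.2 (by omega)
      simp only [Nat.sub_zero, Nat.choose_self, Nat.cast_one, mul_one]
      field_simp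
      linarith [hgrand]
    | succ j ih =>
      intro hj
      have hj' : j ≤ n - 1 := by omega
      have ihv := ih hj'
      set s := n - 1 - j with hs
      have hs1 : 1 ≤ s := by omega
      have hs2 : s ≤ n - 1 := by omega
      have hrec := hstep s hs1 hs2
      have hsub : n - 1 - (j + 1) = s - 1 := by omega
      rw [hsub]
      rw [ihv] at hrec
      -- choose identity: (n-1).choose s * s = (n-1).choose (s-1) * (n - s)
      have hch : (n - 1).choose s * s = (n - 1).choose (s - 1) * (n - s) := by
        have := Nat.choose_succ_right_eq (n - 1) (s - 1)
        have h1 : s - 1 + 1 = s := by omega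
        rw [h1] at this
        rw [this]
        congr 1
        omega
      have hchR : ((n - 1).choose s : ℝ) * s = ((n - 1).choose (s - 1) : ℝ) * ((n : ℝ) - s) := by
        have := congrArg (Nat.cast (R := ℝ)) hch
        push_cast [Nat.cast_sub (by omega : s ≤ n)] at this
        linarith [this]
      have hnR : (n : ℝ) ≠ 0 := Nat.cast_ne_zero.2 (by omega)
      have hc1 : ((n - 1).choose s : ℝ) ≠ 0 :=
        Nat.cast_ne_zero.2 (Nat.choose_pos hs2).ne'
      have hc2 : ((n - 1).choose (s - 1) : ℝ) ≠ 0 :=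
        Nat.cast_ne_zero.2 (Nat.choose_pos (by omega : s - 1 ≤ n - 1)).ne'
      have hsR : (s : ℝ) ≠ 0 := Nat.cast_ne_zero.2 (by omega)
      field_simp at hrec
      rw [eq_div_iff (mul_ne_zero hnR hc2)]
      have h6 : ((s : ℝ) * ((n - 1).choose s : ℝ)) * (pbar (s - 1) * ((n : ℝ) * ((n - 1).choose (s - 1) : ℝ)))
          = ((s : ℝ) * ((n - 1).choose s : ℝ)) * 1 := by
        linear_combination (((n - 1).choose (s - 1) : ℝ)) * hrec - hchR
      exact mul_left_cancel₀ (mul_ne_zero hsR hc1) h6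
  have hkk : k = n - 1 - (n - 1 - k) := by omega
  rw [hkk]
  exact key (n - 1 - k) (by omega)
end

section
/- Let p be a symmetric coalition structure on [n], let v : 2^{[n]} × Ω → ℝ^d be a measurable stochastic game, and let i ≠ j be players such that v(S∪{i},ω) = v(S∪{j},ω) for every S ⊆ [n]∖{i,j} and every ω ∈ Ω (i and j are symmetric players). Then the laws of the distributional values ξ_i(v) and ξ_j(v) coincide. -/
open Finset MeasureTheory

/-- Proposition (v): for a symmetric coalition structure and symmetric players
`i ≠ j`, the laws of the distributional values `ξ_i(v)` and `ξ_j(v)` coincide. -/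
theorem stmt8 {Ω : Type*} [MeasurableSpace Ω] (μ : Measure Ω) [IsProbabilityMeasure μ]
    (n d : ℕ)
    (v : Finset (Fin n) → Ω → EuclideanSpace ℝ (Fin d))
    (hmeas : ∀ S : Finset (Fin n), Measurable (v S))
    (p : Fin n → Finset (Fin n) → ℝ) (pbar : ℕ → ℝ)
    (hp_nonneg : ∀ (i : Fin n) (S : Finset (Fin n)), 0 ≤ p i S)
    (hp_sum : ∀ i : Fin n,
      ∑ S ∈ ((Finset.univ : Finset (Fin n)).erase i).powerset, p i S = 1)
    (hsym : ∀ (i : Fin n) (S : Finset (Fin n)),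
      S ⊆ (Finset.univ : Finset (Fin n)).erase i → p i S = pbar S.card)
    (i j : Fin n) (hij : i ≠ j)
    (hsymp : ∀ S : Finset (Fin n),
      S ⊆ ((Finset.univ : Finset (Fin n)).erase i).erase j →
      ∀ ω : Ω, v (insert i S) ω = v (insert j S) ω) :
    ∑ S ∈ ((Finset.univ : Finset (Fin n)).erase i).powerset,
        ENNReal.ofReal (p i S) •
          Measure.map (fun ω => v (insert i S) ω - v S ω) μ
      = ∑ S ∈ ((Finset.univ : Finset (Fin n)).erase j).powerset,
          ENNReal.ofReal (p j S) •
            Measure.map (fun ω => v (insert j S) ω - v S ω) μ := by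
  classical
  set σ := Equiv.swap i j with hσ
  have hswap : ∀ S : Finset (Fin n), i ∉ S → j ∉ S → S.image σ = S := by
    intro S hiS hjS
    have h : ∀ x ∈ S, σ x = x := fun x hx =>
      Equiv.swap_apply_of_ne_of_ne (ne_of_mem_of_not_mem hx hiS)
        (ne_of_mem_of_not_mem hx hjS)
    rw [Finset.image_congr (fun x hx => h x hx)]
    simp
  have hmem : ∀ (a b : Fin n) (S : Finset (Fin n)),
      S ∈ ((Finset.univ : Finset (Fin n)).erase a).powerset → a ∉ S := by
    intro a b S hS haS
    exact (Finset.mem_erase.mp (Finset.mem_powerset.mp hS haS)).1 rfl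
  refine Finset.sum_nbij' (fun S => S.image σ) (fun S => S.image σ) ?_ ?_ ?_ ?_ ?_
  · intro S hS
    have hiS : i ∉ S := hmem i j S hS
    rw [Finset.mem_powerset]
    intro x hx
    rcases Finset.mem_image.mp hx with ⟨y, hy, rfl⟩
    refine Finset.mem_erase.mpr ⟨?_, Finset.mem_univ _⟩
    intro h
    have : y = i := σ.injective (by rw [h, hσ, Equiv.swap_apply_left])
    exact hiS (this ▸ hy)
  · intro S hS
    have hjS : j ∉ S := hmem j i S hS
    rw [Finset.mem_powerset]
    intro x hx
    rcases Finset.mem_image.mp hx with ⟨y, hy, rfl⟩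
    refine Finset.mem_erase.mpr ⟨?_, Finset.mem_univ _⟩
    intro h
    have : y = j := σ.injective (by rw [h, hσ, Equiv.swap_apply_right])
    exact hjS (this ▸ hy)
  · intro S hS
    simp [Finset.image_image, hσ, Function.comp_def, Equiv.swap_apply_self]
  · intro S hS
    simp [Finset.image_image, hσ, Function.comp_def, Equiv.swap_apply_self]
  · intro S hS
    have hiS : i ∉ S := hmem i j S hS
    have hsubj : S.image σ ⊆ (Finset.univ : Finset (Fin n)).erase j := by
      intro x hx
      rcases Finset.mem_image.mp hx with ⟨y, hy, rfl⟩
      refine Finset.mem_erase.mpr ⟨?_, Finset.mem_univ _⟩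
      intro h
      have : y = i := σ.injective (by rw [h, hσ, Equiv.swap_apply_left])
      exact hiS (this ▸ hy)
    have hcard : (S.image σ).card = S.card :=
      Finset.card_image_of_injective _ σ.injective
    have hp : p i S = p j (S.image σ) := by
      rw [hsym i S (Finset.mem_powerset.mp hS), hsym j _ hsubj, hcard]
    have hfun : (fun ω => v (insert i S) ω - v S ω)
        = fun ω => v (insert j (S.image σ)) ω - v (S.image σ) ω := by
      funext ω
      by_cases hjS : j ∈ S
      · set T := S.erase j with hT
        have hiT : i ∉ T := fun h => hiS (Finset.mem_of_mem_erase h)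
        have hjT : j ∉ T := Finset.notMem_erase _ _
        have hST : S = insert j T := (Finset.insert_erase hjS).symm
        have hTsub : T ⊆ ((Finset.univ : Finset (Fin n)).erase i).erase j := by
          intro x hx
          exact Finset.mem_erase.mpr ⟨ne_of_mem_of_not_mem hx hjT,
            Finset.mem_erase.mpr ⟨ne_of_mem_of_not_mem hx hiT, Finset.mem_univ _⟩⟩
        have hSimg : S.image σ = insert i T := by
          rw [hST, Finset.image_insert, hσ, Equiv.swap_apply_right, ← hσ,
            hswap T hiT hjT]
        have h1 : insert i S = insert j (S.image σ) := by
          rw [hSimg, hST, Finset.insert_comm]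
        have h2 : v S ω = v (S.image σ) ω := by
          rw [hSimg, hST, ← hsymp T hTsub ω]
        rw [h1, h2]
      · rw [hswap S hiS hjS,
          hsymp S (fun x hx => Finset.mem_erase.mpr
            ⟨ne_of_mem_of_not_mem hx hjS,
             Finset.mem_erase.mpr ⟨ne_of_mem_of_not_mem hx hiS, Finset.mem_univ _⟩⟩) ω]
    rw [hp, hfun]
end

section
/- Let ε be a random variable with the standard Gumbel distribution, let t ≥ 1, and let a_1,…,a_t ∈ ℝ. Then E[∏_{j=1}^t F(ε + a_j)] = (1 + Σ_{j=1}^t e^{−a_j})^{−1}, where F(x) = exp(−e^{−x}) is the standard Gumbel CDF. Equivalently, ∫_ℝ (∏_{j=1}^t exp(−e^{−(x+a_j)}))·e^{−x}·exp(−e^{−x}) dx = (1 + Σ_{j=1}^t e^{−a_j})^{−1}. -/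
/-!
The product of the shifted Gumbel CDFs is `exp (-S e^{-x})` with `S = ∑ⱼ e^{-aⱼ}`, so the
integrand is `e^{-x} exp (-(1 + S) e^{-x})`. The substitution `y = e^{-x}` turns the integral
into `∫₀^∞ e^{-(1 + S) y} dy = (1 + S)⁻¹`.
-/

open MeasureTheory Real Set

theorem integral_exp_neg_smul_comp_exp_neg {E : Type*} [NormedAddCommGroup E] [NormedSpace ℝ E]
    (g : ℝ → E) : ∫ x, exp (-x) • g (exp (-x)) = ∫ y in Ioi 0, g y := by
  have himage : (fun x => exp (-x)) '' univ = Ioi 0 := by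
    rw [image_univ, ← range_exp]
    exact (Equiv.neg ℝ).surjective.range_comp exp
  rw [← himage, integral_image_eq_integral_abs_deriv_smul MeasurableSet.univ
    (fun x _ => (hasDerivAt_neg x).exp.hasDerivWithinAt)
    (fun x _ y _ h => neg_injective (exp_injective h)), setIntegral_univ]
  simp [abs_of_pos (exp_pos _)]

theorem integral_exp_neg_mul_exp_neg_mul_exp_neg {c : ℝ} (hc : 0 < c) :
    ∫ x, exp (-x) * exp (-(c * exp (-x))) = c⁻¹ := by
  have hsubst := integral_exp_neg_smul_comp_exp_neg (fun y => exp (-c * y))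
  simp only [smul_eq_mul, neg_mul] at hsubst
  have hexp := integral_exp_mul_Ioi (neg_lt_zero.2 hc) 0
  simp only [neg_mul, mul_zero, exp_zero] at hexp
  rw [hsubst, hexp, neg_div_neg_eq, one_div]

theorem prod_exp_neg_exp_neg_add {ι : Type*} (s : Finset ι) (a : ι → ℝ) (x : ℝ) :
    ∏ j ∈ s, exp (-exp (-(x + a j))) = exp (-((∑ j ∈ s, exp (-a j)) * exp (-x))) := by
  rw [← exp_sum, Finset.sum_mul, ← Finset.sum_neg_distrib]
  refine congrArg exp (Finset.sum_congr rfl fun j _ => ?_)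
  rw [← exp_add]
  ring_nf

theorem stmt13_general (t : ℕ) (a : Fin t → ℝ) :
    ∫ x : ℝ,
        (∏ j : Fin t, Real.exp (-Real.exp (-(x + a j)))) *
          (Real.exp (-x) * Real.exp (-Real.exp (-x)))
      = (1 + ∑ j : Fin t, Real.exp (-(a j)))⁻¹ := by
  have hintegrand : ∀ x : ℝ,
      (∏ j : Fin t, exp (-exp (-(x + a j)))) * (exp (-x) * exp (-exp (-x)))
        = exp (-x) * exp (-((1 + ∑ j : Fin t, exp (-(a j))) * exp (-x))) := by
    intro x
    rw [prod_exp_neg_exp_neg_add, mul_left_comm, ← exp_add]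
    ring_nf
  have hpos : 0 < 1 + ∑ j : Fin t, exp (-(a j)) := by positivity
  simp_rw [hintegrand]
  exact integral_exp_neg_mul_exp_neg_mul_exp_neg hpos

/-- Expectation of a product of shifted Gumbel CDFs under the standard Gumbel
distribution (density `exp(−x − e^{−x})`):
`E[∏_j F(ε + a_j)] = (1 + Σ_j e^{−a_j})⁻¹` where `F(x) = exp(−e^{−x})`. -/
theorem stmt13 (t : ℕ) (ht : 1 ≤ t) (a : Fin t → ℝ) :
    ∫ x : ℝ,
        (∏ j : Fin t, Real.exp (-Real.exp (-(x + a j)))) *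
          (Real.exp (-x) * Real.exp (-Real.exp (-x)))
      = (1 + ∑ j : Fin t, Real.exp (-(a j)))⁻¹ :=
  stmt13_general t a
end

section
/- Let ε₁ and ε₂ be independent standard Gumbel random variables, let m ≥ 1, a_1,…,a_m ∈ ℝ, let k satisfy 1 ≤ k ≤ m+1, and let l ≤ u be real numbers. Set g₁ = log(1 + Σ_{1≤j<k} e^{−a_j}) and g₂ = log(1 + Σ_{k≤j≤m} e^{−a_j}). Then E[(∏_{1≤j<k} F(ε₁ + a_j))·(∏_{k≤j≤m} F(ε₂ + a_j))·1_{l ≤ ε₁ − ε₂ ≤ u}] = e^{−(g₁+g₂)}·(σ(g₂ − g₁ + u) − σ(g₂ − g₁ + l)). -/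
open MeasureTheory Real Filter Set Topology

private lemma expexp_hasDerivAt {C : ℝ} (hC : 0 < C) (x : ℝ) :
    HasDerivAt (fun x : ℝ => C⁻¹ * Real.exp (-(C * Real.exp (-x))))
      (Real.exp (-x - C * Real.exp (-x))) x := by
  have h1 : HasDerivAt (fun x : ℝ => Real.exp (-x)) (-Real.exp (-x)) x := by
    simpa using (hasDerivAt_neg x).exp
  have h2 : HasDerivAt (fun x : ℝ => -(C * Real.exp (-x))) (C * Real.exp (-x)) x := by
    simpa [Pi.neg_def] using (h1.const_mul C).neg
  have h3 := h2.exp.const_mul C⁻¹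
  refine h3.congr_deriv ?_
  rw [sub_eq_add_neg, Real.exp_add]
  field_simp

private lemma expexp_integrable {C : ℝ} (hC : 0 < C) :
    Integrable (fun x : ℝ => Real.exp (-x - C * Real.exp (-x))) := by
  have hcont : Continuous fun x : ℝ => Real.exp (-x - C * Real.exp (-x)) := by
    continuity
  rw [← integrableOn_univ, ← Set.Iic_union_Ioi (a := (0 : ℝ))]
  refine IntegrableOn.union ?_ ?_
  · refine Integrable.mono' ((integrableOn_exp_Iic 0).const_mul (27 / C ^ 3))
      hcont.aestronglyMeasurable.restrict ?_
    rw [ae_restrict_iff' measurableSet_Iic]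
    refine ae_of_all _ fun x hx => ?_
    rw [Real.norm_eq_abs, abs_of_pos (Real.exp_pos _)]
    set t := Real.exp (-x) with htdef
    have ht1 : 1 ≤ t := Real.one_le_exp (by linarith [mem_Iic.mp hx])
    have ht0 : 0 < t := by linarith
    have hC3 : 0 < C ^ 3 := by positivity
    have hEpos : 0 < Real.exp (C * t) := Real.exp_pos _
    have hkey : C ^ 3 * t ^ 3 ≤ 27 * Real.exp (C * t) := by
      have h1 : C * t / 3 ≤ Real.exp (C * t / 3) := by
        nlinarith [Real.add_one_le_exp (C * t / 3)]
      have h2 : (C * t / 3) ^ 3 ≤ Real.exp (C * t / 3) ^ 3 := by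
        have h0 : 0 ≤ C * t / 3 := by positivity
        exact pow_le_pow_left₀ h0 h1 3
      have h3 : Real.exp (C * t / 3) ^ 3 = Real.exp (C * t) := by
        rw [pow_succ, pow_succ, pow_one, ← Real.exp_add, ← Real.exp_add]
        congr 1; ring
      rw [h3] at h2
      nlinarith [h2]
    have hexp : Real.exp (-x - C * Real.exp (-x)) = t * Real.exp (-(C * t)) := by
      rw [sub_eq_add_neg, Real.exp_add]
    have hxe : Real.exp x = t⁻¹ := by
      rw [htdef, ← Real.exp_neg, neg_neg]
    rw [hexp, hxe, Real.exp_neg]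
    have h4 : t * (Real.exp (C * t))⁻¹ = t / Real.exp (C * t) := by ring
    have h5 : 27 / C ^ 3 * t⁻¹ = 27 / (C ^ 3 * t) := by
      field_simp
    rw [h4, h5, div_le_div_iff₀ hEpos (by positivity)]
    nlinarith [hkey, mul_nonneg (mul_nonneg hC3.le (sq_nonneg t)) (sub_nonneg.2 ht1)]
  · refine Integrable.mono' (exp_neg_integrableOn_Ioi 0 one_pos)
      hcont.aestronglyMeasurable.restrict (ae_of_all _ fun x => ?_)
    rw [Real.norm_eq_abs, abs_of_pos (Real.exp_pos _)]
    refine Real.exp_le_exp.2 ?_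
    nlinarith [mul_pos hC (Real.exp_pos (-x))]

private lemma expexp_integral {C : ℝ} (hC : 0 < C) :
    ∫ x : ℝ, Real.exp (-x - C * Real.exp (-x)) = 1 / C := by
  have hbot : Tendsto (fun x : ℝ => C⁻¹ * Real.exp (-(C * Real.exp (-x)))) atBot (𝓝 0) := by
    have h1 : Tendsto (fun x : ℝ => Real.exp (-x)) atBot atTop :=
      Real.tendsto_exp_atTop.comp tendsto_neg_atBot_atTop
    have h2 : Tendsto (fun x : ℝ => -(C * Real.exp (-x))) atBot atBot :=
      tendsto_neg_atTop_atBot.comp (h1.const_mul_atTop hC)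
    have h3 : Tendsto (fun x : ℝ => Real.exp (-(C * Real.exp (-x)))) atBot (𝓝 0) :=
      Real.tendsto_exp_atBot.comp h2
    simpa using h3.const_mul C⁻¹
  have htop : Tendsto (fun x : ℝ => C⁻¹ * Real.exp (-(C * Real.exp (-x)))) atTop (𝓝 (1 / C)) := by
    have h1 : Tendsto (fun x : ℝ => -(C * Real.exp (-x))) atTop (𝓝 0) := by
      simpa using (Real.tendsto_exp_neg_atTop_nhds_zero.const_mul C).neg
    have h2 : Tendsto (fun x : ℝ => Real.exp (-(C * Real.exp (-x)))) atTop (𝓝 1) := by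
      simpa [Function.comp_def] using (Real.continuous_exp.tendsto 0).comp h1
    have := h2.const_mul C⁻¹
    simpa [one_div] using this
  have := MeasureTheory.integral_of_hasDerivAt_of_tendsto
    (fun x => expexp_hasDerivAt hC x) (expexp_integrable hC) hbot htop
  simpa using this
set_option maxHeartbeats 1000000 in
/-- The key expectation in the derivation of the categorical values (box term):
for independent standard Gumbel `ε₁, ε₂`,
`E[(∏_{j<k} F(ε₁+a_j))·(∏_{j≥k} F(ε₂+a_j))·1_{l ≤ ε₁−ε₂ ≤ u}]
  = e^{−(g₁+g₂)}·(σ(g₂−g₁+u) − σ(g₂−g₁+l))`. -/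
theorem stmt15 (m : ℕ) (hm : 1 ≤ m) (a : ℕ → ℝ)
    (k : ℕ) (hk1 : 1 ≤ k) (hk2 : k ≤ m + 1)
    (l u : ℝ) (hlu : l ≤ u)
    (g₁ g₂ : ℝ)
    (hg₁ : g₁ = Real.log (1 + ∑ j ∈ Finset.Ico 1 k, Real.exp (-(a j))))
    (hg₂ : g₂ = Real.log (1 + ∑ j ∈ Finset.Icc k m, Real.exp (-(a j))))
    (F σ : ℝ → ℝ)
    (hF : ∀ x : ℝ, F x = Real.exp (-Real.exp (-x)))
    (hσ : ∀ x : ℝ, σ x = (1 + Real.exp (-x))⁻¹)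
    (gumbel : Measure ℝ)
    (hgumbel : gumbel =
      volume.withDensity (fun x => ENNReal.ofReal (Real.exp (-x - Real.exp (-x))))) :
    ∫ z : ℝ × ℝ,
        (∏ j ∈ Finset.Ico 1 k, F (z.1 + a j)) *
          (∏ j ∈ Finset.Icc k m, F (z.2 + a j)) *
            (if l ≤ z.1 - z.2 ∧ z.1 - z.2 ≤ u then (1 : ℝ) else 0)
        ∂(gumbel.prod gumbel)
      = Real.exp (-(g₁ + g₂)) * (σ (g₂ - g₁ + u) - σ (g₂ - g₁ + l)) := by
  set S₁ := ∑ j ∈ Finset.Ico 1 k, Real.exp (-(a j)) with hS₁def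
  set S₂ := ∑ j ∈ Finset.Icc k m, Real.exp (-(a j)) with hS₂def
  have hS₁0 : 0 ≤ S₁ := Finset.sum_nonneg fun _ _ => (Real.exp_pos _).le
  have hS₂0 : 0 ≤ S₂ := Finset.sum_nonneg fun _ _ => (Real.exp_pos _).le
  have hA : (0:ℝ) < 1 + S₁ := by linarith
  have hB : (0:ℝ) < 1 + S₂ := by linarith
  have hexpg₁ : Real.exp g₁ = 1 + S₁ := by rw [hg₁, Real.exp_log hA]
  have hexpg₂ : Real.exp g₂ = 1 + S₂ := by rw [hg₂, Real.exp_log hB]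
  -- rewrite the products as exponentials
  have hprodF : ∀ (s : Finset ℕ) (x : ℝ),
      (∏ j ∈ s, F (x + a j))
        = Real.exp (-(Real.exp (-x) * ∑ j ∈ s, Real.exp (-(a j)))) := by
    intro s x
    simp only [hF]
    rw [← Real.exp_sum]
    congr 1
    rw [Finset.mul_sum, ← Finset.sum_neg_distrib]
    refine Finset.sum_congr rfl fun j _ => ?_
    rw [← Real.exp_add]
    congr 2
    ring
  simp only [hprodF]
  rw [← hS₁def, ← hS₂def]
  -- density as an ℝ≥0-valued function
  set ρ : ℝ → NNReal := fun x => (Real.exp (-x - Real.exp (-x))).toNNReal with hρdef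
  have hρmeas : Measurable ρ := by
    apply Measurable.real_toNNReal
    fun_prop
  have hgum : gumbel = volume.withDensity (fun x => (ρ x : ENNReal)) := by
    rw [hgumbel]; rfl
  have hsmul : ∀ (x v : ℝ), ρ x • v = Real.exp (-x - Real.exp (-x)) * v := by
    intro x v
    rw [NNReal.smul_def, hρdef, Real.coe_toNNReal _ (Real.exp_pos _).le, smul_eq_mul]
  -- gumbel is a probability measure
  have hint1 : Integrable (fun x : ℝ => Real.exp (-x - Real.exp (-x))) := by
    simpa using expexp_integrable one_pos
  haveI hprob : IsProbabilityMeasure gumbel := by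
    constructor
    rw [hgumbel, withDensity_apply _ MeasurableSet.univ, setLIntegral_univ,
      ← ofReal_integral_eq_lintegral_ofReal hint1 (ae_of_all _ fun x => (Real.exp_pos _).le)]
    have h1 : ∫ x : ℝ, Real.exp (-x - Real.exp (-x)) = 1 := by
      have := expexp_integral one_pos; simpa using this
    rw [h1]; simp
  -- integrability of the integrand on the product space
  set f : ℝ × ℝ → ℝ := fun z =>
    Real.exp (-(Real.exp (-z.1) * S₁)) * Real.exp (-(Real.exp (-z.2) * S₂)) *
      (if l ≤ z.1 - z.2 ∧ z.1 - z.2 ≤ u then (1 : ℝ) else 0) with hfdef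
  have hmeasf : Measurable f := by
    refine Measurable.mul (by fun_prop) ?_
    refine Measurable.ite ?_ measurable_const measurable_const
    have : {z : ℝ × ℝ | l ≤ z.1 - z.2 ∧ z.1 - z.2 ≤ u}
        = (fun z : ℝ × ℝ => z.1 - z.2) ⁻¹' (Set.Icc l u) := rfl
    rw [this]
    exact (measurable_fst.sub measurable_snd) measurableSet_Icc
  have hintf : Integrable f (gumbel.prod gumbel) := by
    refine Integrable.mono' (integrable_const 1) hmeasf.aestronglyMeasurable
      (ae_of_all _ fun z => ?_)
    have h1 : Real.exp (-(Real.exp (-z.1) * S₁)) ≤ 1 := by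
      rw [Real.exp_le_one_iff]
      have : 0 ≤ Real.exp (-z.1) * S₁ := mul_nonneg (Real.exp_pos _).le hS₁0
      linarith
    have h2 : Real.exp (-(Real.exp (-z.2) * S₂)) ≤ 1 := by
      rw [Real.exp_le_one_iff]
      have : 0 ≤ Real.exp (-z.2) * S₂ := mul_nonneg (Real.exp_pos _).le hS₂0
      linarith
    have h3 : (if l ≤ z.1 - z.2 ∧ z.1 - z.2 ≤ u then (1 : ℝ) else 0) ≤ 1 := by
      split_ifs <;> norm_num
    have h3' : (0:ℝ) ≤ (if l ≤ z.1 - z.2 ∧ z.1 - z.2 ≤ u then (1 : ℝ) else 0) := by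
      split_ifs <;> norm_num
    rw [Real.norm_eq_abs, hfdef, abs_of_nonneg
      (mul_nonneg (mul_nonneg (Real.exp_pos _).le (Real.exp_pos _).le) h3')]
    have e2 : (0:ℝ) ≤ Real.exp (-(Real.exp (-z.2) * S₂)) := (Real.exp_pos _).le
    exact mul_le_one₀ (mul_le_one₀ h1 e2 h2) h3' h3
  -- Fubini
  rw [MeasureTheory.integral_prod _ hintf]
  -- the inner integral
  have hcontB : Continuous fun y : ℝ => Real.exp (-y - (1 + S₂) * Real.exp (-y)) := by
    fun_prop
  have hinner : ∀ x : ℝ,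
      ∫ y, f (x, y) ∂gumbel
        = Real.exp (-(Real.exp (-x) * S₁)) *
            ((1 + S₂)⁻¹ * (Real.exp (-((1 + S₂) * Real.exp l * Real.exp (-x)))
              - Real.exp (-((1 + S₂) * Real.exp u * Real.exp (-x))))) := by
    intro x
    rw [hgum, integral_withDensity_eq_integral_smul hρmeas]
    have hfun : (fun y => ρ y • f (x, y))
        = fun y => Real.exp (-(Real.exp (-x) * S₁)) *
            (Set.indicator (Set.Icc (x - u) (x - l))
              (fun y => Real.exp (-y - (1 + S₂) * Real.exp (-y))) y) := by
      funext y
      rw [hsmul, hfdef]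
      simp only [Set.indicator_apply, Set.mem_Icc]
      by_cases h : l ≤ x - y ∧ x - y ≤ u
      · rw [if_pos h, if_pos ⟨by linarith [h.2], by linarith [h.1]⟩]
        rw [show Real.exp (-y - (1 + S₂) * Real.exp (-y))
            = Real.exp (-y - Real.exp (-y)) * Real.exp (-(Real.exp (-y) * S₂)) from by
          rw [← Real.exp_add]; congr 1; ring]
        ring
      · rw [if_neg h, if_neg (by intro hmem; exact h ⟨by linarith [hmem.2], by linarith [hmem.1]⟩)]
        simp
    rw [hfun, integral_const_mul]
    congr 1
    rw [MeasureTheory.integral_indicator measurableSet_Icc,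
      MeasureTheory.integral_Icc_eq_integral_Ioc,
      ← intervalIntegral.integral_of_le (by linarith : x - u ≤ x - l)]
    rw [intervalIntegral.integral_eq_sub_of_hasDerivAt
      (f := fun y => (1 + S₂)⁻¹ * Real.exp (-((1 + S₂) * Real.exp (-y))))
      (fun y _ => expexp_hasDerivAt hB y) (hcontB.intervalIntegrable _ _)]
    rw [show -(x - l) = l + -x from by ring, show -(x - u) = u + -x from by ring,
      Real.exp_add, Real.exp_add]
    rw [mul_sub]
    congr 3 <;> ring
  simp only [hinner]
  -- the outer integral
  rw [hgum, integral_withDensity_eq_integral_smul hρmeas]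
  set Cl := 1 + S₁ + (1 + S₂) * Real.exp l with hCldef
  set Cu := 1 + S₁ + (1 + S₂) * Real.exp u with hCudef
  have hCl : 0 < Cl := by have := mul_pos hB (Real.exp_pos l); rw [hCldef]; linarith
  have hCu : 0 < Cu := by have := mul_pos hB (Real.exp_pos u); rw [hCudef]; linarith
  have hfun2 : (fun x => ρ x • (Real.exp (-(Real.exp (-x) * S₁)) *
        ((1 + S₂)⁻¹ * (Real.exp (-((1 + S₂) * Real.exp l * Real.exp (-x)))
          - Real.exp (-((1 + S₂) * Real.exp u * Real.exp (-x)))))))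
      = fun x => (1 + S₂)⁻¹ *
          (Real.exp (-x - Cl * Real.exp (-x)) - Real.exp (-x - Cu * Real.exp (-x))) := by
    funext x
    rw [hsmul]
    rw [show Real.exp (-x - Cl * Real.exp (-x))
        = Real.exp (-x - Real.exp (-x)) * (Real.exp (-(Real.exp (-x) * S₁)) *
            Real.exp (-((1 + S₂) * Real.exp l * Real.exp (-x)))) from by
      rw [← Real.exp_add, ← Real.exp_add]; congr 1; rw [hCldef]; ring]
    rw [show Real.exp (-x - Cu * Real.exp (-x))
        = Real.exp (-x - Real.exp (-x)) * (Real.exp (-(Real.exp (-x) * S₁)) *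
            Real.exp (-((1 + S₂) * Real.exp u * Real.exp (-x)))) from by
      rw [← Real.exp_add, ← Real.exp_add]; congr 1; rw [hCudef]; ring]
    ring
  rw [hfun2, integral_const_mul,
    integral_sub (expexp_integrable hCl) (expexp_integrable hCu),
    expexp_integral hCl, expexp_integral hCu]
  -- final algebra
  clear_value S₁ S₂ Cl Cu
  rw [hσ, hσ]
  have hegsum : Real.exp (-(g₁ + g₂)) = ((1 + S₁) * (1 + S₂))⁻¹ := by
    rw [Real.exp_neg, Real.exp_add, hexpg₁, hexpg₂]
  have heu : Real.exp (-(g₂ - g₁ + u)) = (1 + S₁) / ((1 + S₂) * Real.exp u) := by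
    rw [show -(g₂ - g₁ + u) = g₁ - (g₂ + u) from by ring, Real.exp_sub, Real.exp_add,
      hexpg₁, hexpg₂]
  have hel : Real.exp (-(g₂ - g₁ + l)) = (1 + S₁) / ((1 + S₂) * Real.exp l) := by
    rw [show -(g₂ - g₁ + l) = g₁ - (g₂ + l) from by ring, Real.exp_sub, Real.exp_add,
      hexpg₁, hexpg₂]
  rw [hegsum, heu, hel]
  have hepu : 0 < Real.exp u := Real.exp_pos u
  have hepl : 0 < Real.exp l := Real.exp_pos l
  have hd1 : (0:ℝ) < 1 + (1 + S₁) / ((1 + S₂) * Real.exp u) := by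
    have := div_pos hA (mul_pos hB hepu); linarith
  have hd2 : (0:ℝ) < 1 + (1 + S₁) / ((1 + S₂) * Real.exp l) := by
    have := div_pos hA (mul_pos hB hepl); linarith
  rw [hCldef, hCudef]
  field_simp
  ring
end

section
/- Let d ≥ 2, let α, β ∈ ℝ^d, let ε_1,…,ε_d be i.i.d. standard Gumbel random variables, and let r ∈ {1,…,d}. Then P(α_r + ε_r > α_j + ε_j for all j ≠ r, and β_r + ε_r > β_j + ε_j for all j ≠ r) = (1 + Σ_{j≠r} e^{max(α_j − α_r, β_j − β_r)})^{−1}. (This is the probability that the category r is simultaneously the argmax under both parameter vectors, i.e., the diagonal entry of the joint distribution of a categorical stochastic marginal contribution under shared Gumbel noise.) -/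
open MeasureTheory Real Set Filter Topology

lemma gderiv (S : ℝ) (hS : 0 < S) (x : ℝ) :
    HasDerivAt (fun x => exp (-(S * exp (-x))) / S) (exp (-x - S * exp (-x))) x := by
  have h1 : HasDerivAt (fun x : ℝ => exp (-x)) (-exp (-x)) x := by
    exact ((Real.hasDerivAt_exp (-x)).comp x (hasDerivAt_neg x)).congr_deriv (by simp)
  have h2 : HasDerivAt (fun x : ℝ => -(S * exp (-x))) (S * exp (-x)) x := by
    exact ((h1.const_mul S).neg).congr_deriv (by ring)
  have h3 := (Real.hasDerivAt_exp (-(S * exp (-x)))).comp x h2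
  have h4 := h3.div_const S
  refine HasDerivAt.congr_deriv h4 ?_
  rw [show -x - S * exp (-x) = -(S * exp (-x)) + -x by ring, Real.exp_add]
  field_simp

lemma gint (S : ℝ) (hS : 0 < S) : Integrable (fun x => exp (-x - S * exp (-x))) := by
  have hc : Continuous (fun x : ℝ => exp (-x - S * exp (-x))) := by continuity
  rw [← integrableOn_univ, ← Set.Iic_union_Ioi (a := (0:ℝ))]
  apply IntegrableOn.union
  · apply Integrable.mono (g := fun x => exp (2/S) * exp x)
      ((integrableOn_exp_Iic 0).const_mul _) hc.aestronglyMeasurable.restrict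
    filter_upwards [ae_restrict_mem measurableSet_Iic] with x hx
    rw [Real.norm_eq_abs, Real.norm_eq_abs, abs_of_pos (exp_pos _),
      abs_of_pos (by positivity), ← Real.exp_add]
    apply Real.exp_le_exp.2
    have h := Real.pow_div_factorial_le_exp (x := -x) (neg_nonneg.2 hx) 2
    have h2 : S * ((-x)^2 / 2) ≤ S * exp (-x) := by
      apply mul_le_mul_of_nonneg_left _ hS.le
      simpa [Nat.factorial] using h
    rw [← mul_le_mul_iff_right₀ hS, show S * (2/S + x) = 2 + S*x by field_simp]
    nlinarith [sq_nonneg (S*x+2), hS, mul_le_mul_of_nonneg_left h2 hS.le]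
  · apply Integrable.mono (g := fun x => exp (-(1:ℝ) * x)) (exp_neg_integrableOn_Ioi 0 one_pos)
      hc.aestronglyMeasurable.restrict
    filter_upwards with x
    rw [Real.norm_eq_abs, Real.norm_eq_abs, abs_of_pos (exp_pos _), abs_of_pos (exp_pos _)]
    apply Real.exp_le_exp.2
    nlinarith [Real.exp_pos (-x), hS, mul_pos hS (Real.exp_pos (-x))]

lemma gtop (S : ℝ) (hS : 0 < S) :
    Tendsto (fun x => exp (-(S * exp (-x))) / S) atTop (𝓝 S⁻¹) := by
  have h1 : Tendsto (fun x : ℝ => -(S * exp (-x))) atTop (𝓝 0) := by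
    have := Real.tendsto_exp_atBot.comp tendsto_neg_atTop_atBot
    simpa using ((this.const_mul S).neg)
  have h2 := (Real.continuous_exp.tendsto 0).comp h1
  simpa [one_div] using h2.div_const S

lemma gbot (S : ℝ) (hS : 0 < S) :
    Tendsto (fun x => exp (-(S * exp (-x))) / S) atBot (𝓝 0) := by
  have h1 : Tendsto (fun x : ℝ => -(S * exp (-x))) atBot atBot := by
    have : Tendsto (fun x : ℝ => exp (-x)) atBot atTop :=
      Real.tendsto_exp_atTop.comp tendsto_neg_atBot_atTop
    exact tendsto_neg_atTop_atBot.comp (this.const_mul_atTop hS)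
  have h2 := Real.tendsto_exp_atBot.comp h1
  simpa using h2.div_const S

lemma key_lintegral (S : ℝ) (hS : 0 < S) :
    ∫⁻ x, ENNReal.ofReal (exp (-x - S * exp (-x))) = ENNReal.ofReal S⁻¹ := by
  rw [← ofReal_integral_eq_lintegral_ofReal (gint S hS)
    (Filter.Eventually.of_forall fun x => (exp_pos _).le)]
  congr 1
  have := integral_of_hasDerivAt_of_tendsto (fun x => gderiv S hS x) (gint S hS)
    (gbot S hS) (gtop S hS)
  simpa using this

lemma cdf_lintegral (c : ℝ) :
    ∫⁻ x in Set.Iio c, ENNReal.ofReal (exp (-x - exp (-x))) = ENNReal.ofReal (exp (-exp (-c))) := by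
  rw [setLIntegral_congr (Iio_ae_eq_Iic (μ := volume) (a := c))]
  have hint := (gint 1 one_pos).integrableOn (s := Set.Iic c)
  have heq : ∀ x : ℝ, exp (-x - exp (-x)) = exp (-x - 1 * exp (-x)) := by intro x; ring_nf
  simp_rw [heq]
  rw [← ofReal_integral_eq_lintegral_ofReal hint
    (Filter.Eventually.of_forall fun x => (exp_pos _).le)]
  congr 1
  have := integral_Iic_of_hasDerivAt_of_tendsto' (fun x _ => gderiv 1 one_pos x)
    hint (gbot 1 one_pos)
  rw [this]
  simp

lemma gumbel_prob :
    IsProbabilityMeasure (volume.withDensity fun x => ENNReal.ofReal (exp (-x - exp (-x)))) := by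
  constructor
  rw [withDensity_apply _ MeasurableSet.univ, Measure.restrict_univ]
  have h := key_lintegral 1 one_pos
  simp only [one_mul] at h
  rw [h]; simp

lemma gumbel_Iio (c : ℝ) :
    (volume.withDensity fun x => ENNReal.ofReal (exp (-x - exp (-x)))) (Iio c)
      = ENNReal.ofReal (exp (-exp (-c))) := by
  rw [withDensity_apply _ measurableSet_Iio, cdf_lintegral]

/-- Diagonal entries of the joint distribution of a categorical stochastic marginal
contribution under shared Gumbel noise: the probability that category `r` is the
argmax under both parameter vectors `α` and `β` is
`(1 + Σ_{j≠r} e^{max(α_j−α_r, β_j−β_r)})⁻¹`. -/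
theorem stmt16 (d : ℕ) (hd : 2 ≤ d) (α β : Fin d → ℝ) (r : Fin d)
    (gumbel : Measure ℝ)
    (hgumbel : gumbel =
      volume.withDensity (fun x => ENNReal.ofReal (Real.exp (-x - Real.exp (-x))))) :
    (Measure.pi fun _ : Fin d => gumbel)
        {ε : Fin d → ℝ |
          (∀ j : Fin d, j ≠ r → α j + ε j < α r + ε r) ∧
          (∀ j : Fin d, j ≠ r → β j + ε j < β r + ε r)}
      = ENNReal.ofReal
          ((1 + ∑ j ∈ Finset.univ.erase r, Real.exp (max (α j - α r) (β j - β r)))⁻¹) := by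
  obtain ⟨n, rfl⟩ : ∃ n, d = n + 1 := ⟨d - 1, by omega⟩
  subst hgumbel
  set μ : Measure ℝ :=
    volume.withDensity (fun x => ENNReal.ofReal (Real.exp (-x - Real.exp (-x)))) with hμ
  haveI : IsProbabilityMeasure μ := gumbel_prob
  set γ : Fin (n + 1) → ℝ := fun j => max (α j - α r) (β j - β r) with hγ
  set s : Set (Fin (n + 1) → ℝ) :=
    {ε | (∀ j : Fin (n+1), j ≠ r → α j + ε j < α r + ε r) ∧
         (∀ j : Fin (n+1), j ≠ r → β j + ε j < β r + ε r)} with hsdef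
  have hlt : ∀ (c : Fin (n+1) → ℝ) (j : Fin (n+1)),
      MeasurableSet {ε : Fin (n+1) → ℝ | c j + ε j < c r + ε r} := fun c j =>
    measurableSet_lt ((measurable_pi_apply j).const_add _) ((measurable_pi_apply r).const_add _)
  have hs : MeasurableSet s := by
    rw [hsdef, Set.setOf_and]
    apply MeasurableSet.inter <;>
    · rw [Set.setOf_forall]
      refine MeasurableSet.iInter fun j => ?_
      by_cases hj : j = r
      · simp [hj]
      · simp only [hj, ne_eq, not_false_eq_true, forall_true_left, true_implies]
        exact hlt _ j
  set e := MeasurableEquiv.piFinSuccAbove (fun _ : Fin (n+1) => ℝ) r with he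
  have hmp := measurePreserving_piFinSuccAbove (fun _ : Fin (n+1) => μ) r
  have key1 : (Measure.pi fun _ : Fin (n+1) => μ) s
      = (μ.prod (Measure.pi fun _ : Fin n => μ)) (e.symm ⁻¹' s) :=
    ((hmp.symm e).measure_preimage hs.nullMeasurableSet).symm
  set T : Set (ℝ × (Fin n → ℝ)) :=
    {p | ∀ k, p.2 k < p.1 - γ (r.succAbove k)} with hTdef
  have hpre : e.symm ⁻¹' s = T := by
    ext ⟨x, y⟩
    have hsymm : e.symm (x, y) = r.insertNth x y := rfl
    simp only [Set.mem_preimage, hsymm, hsdef, Set.mem_setOf_eq, hTdef]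
    constructor
    · rintro ⟨h1, h2⟩ k
      have hk : r.succAbove k ≠ r := Fin.succAbove_ne r k
      have e1 := h1 _ hk
      have e2 := h2 _ hk
      rw [Fin.insertNth_apply_succAbove, Fin.insertNth_apply_same] at e1 e2
      rcases le_total (α (r.succAbove k) - α r) (β (r.succAbove k) - β r) with h | h
      · rw [hγ]; simp only [max_eq_right h]; linarith
      · rw [hγ]; simp only [max_eq_left h]; linarith
    · intro h
      constructor <;> intro j hj <;>
      · obtain ⟨k, rfl⟩ := Fin.exists_succAbove_eq hj
        have := h k
        rw [Fin.insertNth_apply_succAbove, Fin.insertNth_apply_same]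
        have h1 : α (r.succAbove k) - α r ≤ γ (r.succAbove k) := le_max_left _ _
        have h2 : β (r.succAbove k) - β r ≤ γ (r.succAbove k) := le_max_right _ _
        linarith
  have hT : MeasurableSet T := by
    rw [hTdef, Set.setOf_forall]
    exact MeasurableSet.iInter fun k => measurableSet_lt (by fun_prop) (by fun_prop)
  rw [key1, hpre, Measure.prod_apply hT]
  have hsec : ∀ x : ℝ, (Prod.mk x ⁻¹' T) = Set.pi Set.univ (fun k => Iio (x - γ (r.succAbove k))) := by
    intro x; ext y; simp [hTdef, Set.mem_pi]
  set Tsum : ℝ := ∑ k : Fin n, exp (γ (r.succAbove k)) with hTsum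
  have hTsum_pos : 0 ≤ Tsum := Finset.sum_nonneg fun k _ => (exp_pos _).le
  have hinner : ∀ x : ℝ, (Measure.pi fun _ : Fin n => μ) (Prod.mk x ⁻¹' T)
      = ENNReal.ofReal (exp (-(Tsum * exp (-x)))) := by
    intro x
    rw [hsec x, Measure.pi_pi]
    have : ∀ k : Fin n, μ (Iio (x - γ (r.succAbove k)))
        = ENNReal.ofReal (exp (-exp (-(x - γ (r.succAbove k))))) := fun k => gumbel_Iio _
    simp_rw [this]
    rw [← ENNReal.ofReal_prod_of_nonneg (fun k _ => (exp_pos _).le), ← Real.exp_sum]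
    congr 2
    have : ∀ k : Fin n, -exp (-(x - γ (r.succAbove k)))
        = exp (γ (r.succAbove k)) * (-exp (-x)) := by
      intro k
      rw [show -(x - γ (r.succAbove k)) = γ (r.succAbove k) + -x by ring, Real.exp_add]
      ring
    simp_rw [this]
    rw [← Finset.sum_mul, mul_neg, hTsum]
  simp_rw [hinner]
  have hρm : Measurable (fun x : ℝ => ENNReal.ofReal (Real.exp (-x - Real.exp (-x)))) := by
    fun_prop
  have hgm : Measurable (fun x : ℝ => ENNReal.ofReal (exp (-(Tsum * exp (-x))))) := by
    fun_prop
  rw [hμ, lintegral_withDensity_eq_lintegral_mul _ hρm hgm]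
  have hptw : ∀ x : ℝ,
      ((fun x => ENNReal.ofReal (Real.exp (-x - Real.exp (-x)))) *
        fun x => ENNReal.ofReal (exp (-(Tsum * exp (-x))))) x
      = ENNReal.ofReal (exp (-x - (1 + Tsum) * exp (-x))) := by
    intro x
    simp only [Pi.mul_apply]
    rw [← ENNReal.ofReal_mul (exp_pos _).le, ← Real.exp_add]
    congr 1
    ring
  simp_rw [hptw]
  rw [key_lintegral (1 + Tsum) (by linarith)]
  congr 2
  rw [hTsum]
  have h1 := Fin.sum_univ_succAbove (fun j => exp (γ j)) r
  have h2 := Finset.add_sum_erase Finset.univ (fun j => exp (γ j)) (Finset.mem_univ r)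
  rw [hγ] at h1 h2 ⊢
  simp only at h1 h2 ⊢
  linarith
end

section
/- Let d ≥ 2, let α, β ∈ ℝ^d, let r ≠ s in {1,…,d} with α_r − β_r ≤ α_s − β_s, and let ε_1,…,ε_d be i.i.d. standard Gumbel random variables. Then P(α_r + ε_r > α_j + ε_j for all j ≠ r, and β_s + ε_s > β_j + ε_j for all j ≠ s) = 0; that is, under shared Gumbel noise, the prediction cannot flip from category s to category r when ν_r = α_r − β_r does not exceed ν_s = α_s − β_s. -/
open MeasureTheory Real

/-- Under shared Gumbel noise, the prediction cannot flip from category `s` to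
category `r` when `ν_r = α_r − β_r` does not exceed `ν_s = α_s − β_s`: the
probability that the argmax is `r` under `α` and `s` under `β` is zero. -/
theorem stmt18 (d : ℕ) (hd : 2 ≤ d) (α β : Fin d → ℝ) (r s : Fin d) (hrs : r ≠ s)
    (hν : α r - β r ≤ α s - β s)
    (gumbel : Measure ℝ)
    (hgumbel : gumbel =
      volume.withDensity (fun x => ENNReal.ofReal (Real.exp (-x - Real.exp (-x))))) :
    (Measure.pi fun _ : Fin d => gumbel)
        {ε : Fin d → ℝ |
          (∀ j : Fin d, j ≠ r → α j + ε j < α r + ε r) ∧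
          (∀ j : Fin d, j ≠ s → β j + ε j < β s + ε s)}
      = 0 := by
  have hempty : {ε : Fin d → ℝ |
          (∀ j : Fin d, j ≠ r → α j + ε j < α r + ε r) ∧
          (∀ j : Fin d, j ≠ s → β j + ε j < β s + ε s)} = ∅ := by
    ext ε
    simp only [Set.mem_setOf_eq, Set.mem_empty_iff_false, iff_false]
    rintro ⟨h1, h2⟩
    have a := h1 s hrs.symm
    have b := h2 r hrs
    linarith
  rw [hempty]
  simp
end
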